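/- arXiv:2010.04412 — 5 statements merged into one kernel-verified Lean document; each statement's English description precedes it below -/
import Mathlib

section
/- (Lemma 1, second case.) Let f : Finset V → ℝ be nonnegative, monotone, and submodular, let k ≥ 1 be an integer, let α ∈ [0, 1), and let O, S ⊆ V be finite sets with |O| ≤ k. Suppose τ > 0 satisfies τ ≤ (1 + α)·f(O)/(2k) and Δf(v|S) < τ for every v ∈ O \ S. Then f(S) ≥ ((1 − α)/2)·f(O). -/
lemma union_gain_bound {V : Type*} [DecidableEq V] (f : Finset V → ℝ)
    (hsub : ∀ (A B : Finset V), A ⊆ B → ∀ v ∉ B,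
      f (insert v B) - f B ≤ f (insert v A) - f A)
    (S : Finset V) :
    ∀ T : Finset V, f (S ∪ T) ≤ f S + ∑ v ∈ T, (f (insert v S) - f S) := by
  intro T
  induction T using Finset.induction_on with
  | empty => simp
  | @insert a T ha ih =>
    rw [Finset.sum_insert ha]
    by_cases haS : a ∈ S
    · rw [Finset.union_insert, Finset.insert_eq_self.mpr (Finset.mem_union_left T haS),
        Finset.insert_eq_self.mpr haS]
      linarith
    · have haST : a ∉ S ∪ T := by simp [haS, ha]
      have h1 : S ∪ insert a T = insert a (S ∪ T) := Finset.union_insert a S T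
      have h2 := hsub S (S ∪ T) Finset.subset_union_left a haST
      rw [h1]; linarith

/-- Lemma 1, second case: if every element of `O \ S` has marginal gain
below `τ ≤ (1+α)·f(O)/(2k)`, then `f S ≥ ((1-α)/2)·f O`. -/
theorem low_marginal_gains_imp_half_approx
    {V : Type*} [DecidableEq V] (f : Finset V → ℝ)
    (hnn : ∀ S : Finset V, 0 ≤ f S)
    (hmono : ∀ A B : Finset V, A ⊆ B → f A ≤ f B)
    (hsub : ∀ (A B : Finset V), A ⊆ B → ∀ v ∉ B,
      f (insert v B) - f B ≤ f (insert v A) - f A)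
    (k : ℕ) (hk : 1 ≤ k) (α : ℝ) (hα0 : 0 ≤ α) (hα1 : α < 1)
    (O S : Finset V) (hOcard : O.card ≤ k)
    (τ : ℝ) (hτpos : 0 < τ) (hτub : τ ≤ (1 + α) * f O / (2 * k))
    (hgain : ∀ v ∈ O \ S, f (insert v S) - f S < τ) :
    ((1 - α) / 2) * f O ≤ f S := by
  have h1 : f O ≤ f (S ∪ (O \ S)) := by
    apply hmono
    intro x hx
    simp [Finset.mem_union, Finset.mem_sdiff]; tauto
  have h2 := union_gain_bound f hsub S (O \ S)
  have h3 : ∑ v ∈ O \ S, (f (insert v S) - f S) ≤ (O \ S).card * τ := by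
    calc ∑ v ∈ O \ S, (f (insert v S) - f S) ≤ ∑ _v ∈ O \ S, τ :=
          Finset.sum_le_sum fun v hv => (hgain v hv).le
      _ = (O \ S).card * τ := by rw [Finset.sum_const, nsmul_eq_mul]
  have hcard : ((O \ S).card : ℝ) ≤ k := by
    exact_mod_cast le_trans (Finset.card_le_card (Finset.sdiff_subset)) hOcard
  have h4 : ((O \ S).card : ℝ) * τ ≤ k * τ :=
    mul_le_mul_of_nonneg_right hcard hτpos.le
  have hkpos : (0:ℝ) < k := by exact_mod_cast hk
  have h5 : (k:ℝ) * τ ≤ (1 + α) * f O / 2 := by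
    have := mul_le_mul_of_nonneg_left hτub hkpos.le
    calc (k:ℝ) * τ ≤ k * ((1 + α) * f O / (2 * k)) := this
      _ = (1 + α) * f O / 2 := by field_simp
  linarith
end

section
/- (Lemma 1, combined.) Let f : Finset V → ℝ be nonnegative, monotone, and submodular, let k ≥ 1 be an integer, let α ∈ [0, 1), and let O ⊆ V be a finite set with |O| ≤ k. Let τ be a real number with f(O)/(2k) ≤ τ ≤ (1 + α)·f(O)/(2k) and τ > 0, and let S = S_m be the final set of a greedy sequence of length m for f in which every gain satisfies g_j ≥ τ. If either m = k, or Δf(v|S) < τ for every v ∈ O \ S, then f(S) ≥ ((1 − α)/2)·f(O). -/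
lemma submod_union_bound {V : Type*} [DecidableEq V] (f : Finset V → ℝ)
    (hsub : ∀ (A B : Finset V), A ⊆ B → ∀ v ∉ B,
      f (insert v B) - f B ≤ f (insert v A) - f A)
    (S : Finset V) : ∀ T : Finset V,
    f (S ∪ T) - f S ≤ ∑ v ∈ T \ S, (f (insert v S) - f S) := by
  intro T
  induction T using Finset.induction_on with
  | empty => simp
  | @insert a T ha ih =>
    by_cases haS : a ∈ S
    · have h1 : S ∪ insert a T = S ∪ T := by
        rw [Finset.union_insert, Finset.insert_eq_self.mpr (Finset.mem_union_left _ haS)]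
      have h2 : insert a T \ S = T \ S := Finset.insert_sdiff_of_mem _ haS
      rw [h1, h2]; exact ih
    · have haST : a ∉ S ∪ T := by simp [haS, ha]
      have h1 : S ∪ insert a T = insert a (S ∪ T) := Finset.union_insert a S T
      have h2 : insert a T \ S = insert a (T \ S) :=
        Finset.insert_sdiff_of_notMem _ haS
      have h3 : a ∉ T \ S := by simp [ha]
      rw [h1, h2, Finset.sum_insert h3]
      have key := hsub S (S ∪ T) Finset.subset_union_left a haST
      linarith

/-- Lemma 1, combined: for a greedy sequence of length `m` for `f` whose
gains are all at least `τ`, with `f(O)/(2k) ≤ τ ≤ (1+α)·f(O)/(2k)` and `τ > 0`, if either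
`m = k` or every element of `O \ S` has marginal gain below `τ`, then
`f S ≥ ((1-α)/2)·f O` for the final set `S = Sets m`. -/
theorem greedy_threshold_half_approx
    {V : Type*} [DecidableEq V] (f : Finset V → ℝ)
    (hnn : ∀ S : Finset V, 0 ≤ f S)
    (hmono : ∀ A B : Finset V, A ⊆ B → f A ≤ f B)
    (hsub : ∀ (A B : Finset V), A ⊆ B → ∀ v ∉ B,
      f (insert v B) - f B ≤ f (insert v A) - f A)
    (k : ℕ) (hk : 1 ≤ k) (α : ℝ) (hα0 : 0 ≤ α) (hα1 : α < 1)
    (O : Finset V) (hOcard : O.card ≤ k)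
    (τ : ℝ) (hτpos : 0 < τ)
    (hτlb : f O / (2 * k) ≤ τ) (hτub : τ ≤ (1 + α) * f O / (2 * k))
    (m : ℕ) (Sets : ℕ → Finset V) (hinit : Sets 0 = ∅)
    (hstep : ∀ j < m, ∃ v ∉ Sets j, Sets (j + 1) = insert v (Sets j))
    (hg : ∀ j < m, τ ≤ f (Sets (j + 1)) - f (Sets j))
    (hcase : m = k ∨ ∀ v ∈ O \ Sets m, f (insert v (Sets m)) - f (Sets m) < τ) :
    ((1 - α) / 2) * f O ≤ f (Sets m) := by
  have hkpos : (0:ℝ) < k := by exact_mod_cast hk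
  have hfO : 0 ≤ f O := hnn O
  rcases hcase with rfl | hsmall
  · -- telescoping: f (Sets m) ≥ m * τ
    have htel : ∀ j ≤ m, (j:ℝ) * τ ≤ f (Sets j) := by
      intro j hj
      induction j with
      | zero => simpa using hnn (Sets 0)
      | succ j ih =>
        have h1 := hg j (by omega)
        have h2 := ih (by omega)
        push_cast
        linarith
    have h := htel m le_rfl
    have : f O / 2 ≤ (m:ℝ) * τ := by
      have := mul_le_mul_of_nonneg_left hτlb (le_of_lt hkpos)
      calc f O / 2 = (m:ℝ) * (f O / (2 * m)) := by field_simp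
        _ ≤ (m:ℝ) * τ := by
          exact mul_le_mul_of_nonneg_left hτlb (le_of_lt hkpos)
    nlinarith
  · -- submodularity case
    have hbound := submod_union_bound f hsub (Sets m) O
    have hsum : ∑ v ∈ O \ Sets m, (f (insert v (Sets m)) - f (Sets m))
        ≤ (O \ Sets m).card * τ := by
      calc ∑ v ∈ O \ Sets m, (f (insert v (Sets m)) - f (Sets m))
          ≤ ∑ _v ∈ O \ Sets m, τ :=
            Finset.sum_le_sum fun v hv => le_of_lt (hsmall v hv)
        _ = (O \ Sets m).card * τ := by simp [mul_comm]
    have hcard : ((O \ Sets m).card : ℝ) ≤ (k:ℝ) := by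
      have : (O \ Sets m).card ≤ O.card := Finset.card_le_card (Finset.sdiff_subset)
      exact_mod_cast le_trans this hOcard
    have hkτ : ((O \ Sets m).card : ℝ) * τ ≤ (k:ℝ) * τ :=
      mul_le_mul_of_nonneg_right hcard (le_of_lt hτpos)
    have hfOu : f O ≤ f (Sets m ∪ O) := hmono _ _ Finset.subset_union_right
    have hub : (k:ℝ) * τ ≤ (1 + α) * f O / 2 := by
      have := mul_le_mul_of_nonneg_left hτub (le_of_lt hkpos)
      calc (k:ℝ) * τ ≤ (k:ℝ) * ((1 + α) * f O / (2 * k)) :=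
            mul_le_mul_of_nonneg_left hτub (le_of_lt hkpos)
        _ = (1 + α) * f O / 2 := by field_simp
    linarith
end

section
/- (Abstract form of Theorem 1: approximation guarantee of the multi-pass algorithm MP-FSM.) Let f : Finset V → ℝ be nonnegative, monotone, and submodular, let ε ∈ (0, 1), let k ≥ 1 be an integer, and let s_1, …, s_m be a greedy sequence of length m for f with final set S = S_m and gains g_1, …, g_m. Let O ⊆ V be a finite set with |O| ≤ k, written as a disjoint union O = O′ ⊎ O″. Suppose (i) there is an injective map π : O′ → {1, …, m} such that (1 − ε)·Δf(o|S) ≤ g_{π(o)} for every o ∈ O′, and (ii) there is a real δ with 0 ≤ δ ≤ f(S) such that Δf(o|S) ≤ ε·δ/(k·(1 − ε)) for every o ∈ O″. Then f(O) ≤ (2/(1 − ε))·f(S); equivalently, f(S) ≥ ((1 − ε)/2)·f(O). -/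
lemma marg_sum {V : Type*} [DecidableEq V] (f : Finset V → ℝ)
    (hmono : ∀ A B : Finset V, A ⊆ B → f A ≤ f B)
    (hsub : ∀ (A B : Finset V), A ⊆ B → ∀ v ∉ B,
      f (insert v B) - f B ≤ f (insert v A) - f A)
    (S : Finset V) : ∀ A : Finset V,
    f (A ∪ S) ≤ f S + ∑ o ∈ A, (f (insert o S) - f S) := by
  intro A
  induction A using Finset.induction_on with
  | empty => simp
  | @insert a A ha ih =>
    rw [Finset.sum_insert ha, Finset.insert_union]
    by_cases haS : a ∈ A ∪ S
    · rw [Finset.insert_eq_self.mpr haS]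
      have h1 : f S ≤ f (insert a S) := hmono _ _ (Finset.subset_insert _ _)
      linarith
    · have := hsub S (A ∪ S) Finset.subset_union_right a haS
      linarith
/-- abstract form of Theorem 1, approximation guarantee of MP-FSM:
Let `S = Sets m` be the final set of a greedy sequence of length `m` for `f`, and let
`O = O' ⊎ O''` with `|O| ≤ k`. If every `o ∈ O'` can be injectively charged to a step
`π o < m` whose gain dominates `(1-ε)·Δf(o|S)`, and every `o ∈ O''` has marginal gain
at most `ε·δ/(k·(1-ε))` for some `0 ≤ δ ≤ f S`, then `f O ≤ (2/(1-ε))·f S`. -/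
theorem mp_fsm_approximation
    {V : Type*} [DecidableEq V] (f : Finset V → ℝ)
    (hnn : ∀ S : Finset V, 0 ≤ f S)
    (hmono : ∀ A B : Finset V, A ⊆ B → f A ≤ f B)
    (hsub : ∀ (A B : Finset V), A ⊆ B → ∀ v ∉ B,
      f (insert v B) - f B ≤ f (insert v A) - f A)
    (ε : ℝ) (hε0 : 0 < ε) (hε1 : ε < 1)
    (k : ℕ) (hk : 1 ≤ k)
    (m : ℕ) (Sets : ℕ → Finset V) (hinit : Sets 0 = ∅)
    (hstep : ∀ j < m, ∃ v ∉ Sets j, Sets (j + 1) = insert v (Sets j))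
    (O O' O'' : Finset V) (hOsplit : O = O' ∪ O'') (hOdisj : Disjoint O' O'')
    (hOcard : O.card ≤ k)
    (π : V → ℕ) (hπlt : ∀ o ∈ O', π o < m) (hπinj : Set.InjOn π ↑O')
    (hπdom : ∀ o ∈ O',
      (1 - ε) * (f (insert o (Sets m)) - f (Sets m)) ≤
        f (Sets (π o + 1)) - f (Sets (π o)))
    (δ : ℝ) (hδ0 : 0 ≤ δ) (hδub : δ ≤ f (Sets m))
    (hsmall : ∀ o ∈ O'',
      f (insert o (Sets m)) - f (Sets m) ≤ ε * δ / (k * (1 - ε))) :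
    f O ≤ (2 / (1 - ε)) * f (Sets m) := by
  set S := Sets m with hS
  have h1ε : (0:ℝ) < 1 - ε := by linarith
  -- gains nonneg and telescoping
  have hgain : ∀ j < m, 0 ≤ f (Sets (j+1)) - f (Sets j) := by
    intro j hj
    obtain ⟨v, hv, hvs⟩ := hstep j hj
    rw [hvs]
    have := hmono _ _ (Finset.subset_insert v (Sets j))
    linarith
  have htel : ∑ j ∈ Finset.range m, (f (Sets (j+1)) - f (Sets j)) = f S - f (Sets 0) :=
    Finset.sum_range_sub (fun j => f (Sets j)) m
  have htot : ∑ j ∈ Finset.range m, (f (Sets (j+1)) - f (Sets j)) ≤ f S := by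
    rw [htel]; have := hnn (Sets 0); linarith
  -- bound sum over O'
  have hO'sum : ∑ o ∈ O', (f (insert o S) - f S) ≤ f S / (1 - ε) := by
    have h1 : ∑ o ∈ O', (f (insert o S) - f S) ≤
        (∑ o ∈ O', (f (Sets (π o + 1)) - f (Sets (π o)))) / (1 - ε) := by
      rw [le_div_iff₀ h1ε, Finset.sum_mul]
      apply Finset.sum_le_sum
      intro o ho
      have := hπdom o ho
      linarith
    have h2 : ∑ o ∈ O', (f (Sets (π o + 1)) - f (Sets (π o)))
        = ∑ j ∈ O'.image π, (f (Sets (j+1)) - f (Sets j)) := by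
      rw [Finset.sum_image (fun a ha b hb => hπinj ha hb)]
    have h3 : ∑ j ∈ O'.image π, (f (Sets (j+1)) - f (Sets j)) ≤ f S := by
      refine le_trans (Finset.sum_le_sum_of_subset_of_nonneg ?_ ?_) htot
      · intro j hj
        simp only [Finset.mem_image] at hj
        obtain ⟨o, ho, rfl⟩ := hj
        exact Finset.mem_range.mpr (hπlt o ho)
      · intro j hj _; exact hgain j (Finset.mem_range.mp hj)
    calc ∑ o ∈ O', (f (insert o S) - f S) ≤ _ := h1
      _ ≤ f S / (1 - ε) := by
          rw [h2] at *
          gcongr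
  -- bound sum over O''
  have hkpos : (0:ℝ) < k := by exact_mod_cast hk
  have hO''sum : ∑ o ∈ O'', (f (insert o S) - f S) ≤ ε * f S / (1 - ε) := by
    calc ∑ o ∈ O'', (f (insert o S) - f S)
        ≤ ∑ _o ∈ O'', ε * δ / (k * (1 - ε)) := Finset.sum_le_sum (fun o ho => hsmall o ho)
      _ = O''.card * (ε * δ / (k * (1 - ε))) := by
          rw [Finset.sum_const, nsmul_eq_mul]
      _ ≤ k * (ε * δ / (k * (1 - ε))) := by
          apply mul_le_mul_of_nonneg_right
          · have hsub' : O'' ⊆ O := by rw [hOsplit]; exact Finset.subset_union_right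
            have : O''.card ≤ k := le_trans (Finset.card_le_card hsub') hOcard
            exact_mod_cast this
          · positivity
      _ = ε * δ / (1 - ε) := by field_simp
      _ ≤ ε * f S / (1 - ε) := by
          gcongr
  -- combine
  have hmain : f O ≤ f S + ∑ o ∈ O, (f (insert o S) - f S) := by
    have h0 : f O ≤ f (O ∪ S) := hmono _ _ Finset.subset_union_left
    exact h0.trans (marg_sum f hmono hsub S O)
  have hsplit : ∑ o ∈ O, (f (insert o S) - f S)
      = ∑ o ∈ O', (f (insert o S) - f S) + ∑ o ∈ O'', (f (insert o S) - f S) := by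
    rw [hOsplit, Finset.sum_union hOdisj]
  have hfin : f O ≤ f S + f S / (1 - ε) + ε * f S / (1 - ε) := by
    rw [hsplit] at hmain; linarith
  have : f S + f S / (1 - ε) + ε * f S / (1 - ε) = (2 / (1 - ε)) * f S := by
    field_simp; ring
  linarith
end

section
/- (Lemma 2, Case 1.) Let f : Finset V → ℝ be nonnegative, monotone, and submodular, let k ≥ 1 be an integer, let β ∈ [0, 1), and let s_1, …, s_m be a greedy sequence of length m for f with final set S = S_m and gains g_1, …, g_m. Let O ⊆ V be a finite set with |O| ≤ k, and write O \ S = O₂ ⊎ O₃ as a disjoint union. Suppose (i) there is an injective map π : O₂ → {1, …, m} such that Δf(o|S) ≤ g_{π(o)} for every o ∈ O₂, and (ii) Δf(o|S) ≤ β·f(O)/k for every o ∈ O₃. Then f(S) ≥ ((1 − β)/2)·f(O). -/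
/-- Marginal-gain sum bound from submodularity. -/
lemma marginal_sum_bound {V : Type*} [DecidableEq V] (f : Finset V → ℝ)
    (hmono : ∀ A B : Finset V, A ⊆ B → f A ≤ f B)
    (hsub : ∀ (A B : Finset V), A ⊆ B → ∀ v ∉ B,
      f (insert v B) - f B ≤ f (insert v A) - f A)
    (S : Finset V) (T : Finset V) :
    f (S ∪ T) - f S ≤ ∑ o ∈ T, (f (insert o S) - f S) := by
  induction T using Finset.induction_on with
  | empty => simp
  | @insert a T ha ih =>
    rw [Finset.sum_insert ha]
    by_cases haS : a ∈ S ∪ T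
    · have h1 : S ∪ insert a T = S ∪ T := by
        ext x; simp only [Finset.mem_union, Finset.mem_insert]; aesop
      have h2 : 0 ≤ f (insert a S) - f S := by
        have := hmono S (insert a S) (Finset.subset_insert _ _); linarith
      rw [h1]; linarith
    · have h1 : S ∪ insert a T = insert a (S ∪ T) := by
        ext x; simp only [Finset.mem_union, Finset.mem_insert]; tauto
      have h2 := hsub S (S ∪ T) Finset.subset_union_left a haS
      rw [h1]; linarith

/-- Lemma 2, Case 1: let `S = Sets m` be the final set of a greedy
sequence of length `m` for `f`, `O` with `|O| ≤ k`, and `O \ S = O₂ ⊎ O₃`. If every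
`o ∈ O₂` can be injectively charged to a step `π o < m` whose gain dominates
`Δf(o|S)`, and every `o ∈ O₃` has marginal gain at most `β·f(O)/k`, then
`f S ≥ ((1-β)/2)·f O`. -/
theorem sp_fsm_case1
    {V : Type*} [DecidableEq V] (f : Finset V → ℝ)
    (hnn : ∀ S : Finset V, 0 ≤ f S)
    (hmono : ∀ A B : Finset V, A ⊆ B → f A ≤ f B)
    (hsub : ∀ (A B : Finset V), A ⊆ B → ∀ v ∉ B,
      f (insert v B) - f B ≤ f (insert v A) - f A)
    (k : ℕ) (hk : 1 ≤ k) (β : ℝ) (hβ0 : 0 ≤ β) (hβ1 : β < 1)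
    (m : ℕ) (Sets : ℕ → Finset V) (hinit : Sets 0 = ∅)
    (hstep : ∀ j < m, ∃ v ∉ Sets j, Sets (j + 1) = insert v (Sets j))
    (O O₂ O₃ : Finset V) (hOcard : O.card ≤ k)
    (hOsplit : O \ Sets m = O₂ ∪ O₃) (hOdisj : Disjoint O₂ O₃)
    (π : V → ℕ) (hπlt : ∀ o ∈ O₂, π o < m) (hπinj : Set.InjOn π ↑O₂)
    (hπdom : ∀ o ∈ O₂,
      f (insert o (Sets m)) - f (Sets m) ≤ f (Sets (π o + 1)) - f (Sets (π o)))
    (hsmall : ∀ o ∈ O₃, f (insert o (Sets m)) - f (Sets m) ≤ β * f O / k) :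
    ((1 - β) / 2) * f O ≤ f (Sets m) := by
  set S := Sets m with hS
  -- gains are nonnegative for steps j < m
  have hgain : ∀ j < m, 0 ≤ f (Sets (j + 1)) - f (Sets j) := by
    intro j hj
    obtain ⟨v, hv, hvs⟩ := hstep j hj
    have := hmono (Sets j) (Sets (j + 1)) (by rw [hvs]; exact Finset.subset_insert _ _)
    linarith
  -- telescoping sum
  have htel : ∑ j ∈ Finset.range m, (f (Sets (j + 1)) - f (Sets j)) = f S - f (Sets 0) := by
    exact Finset.sum_range_sub (fun j => f (Sets j)) m
  -- sum over O₂
  have hO2 : ∑ o ∈ O₂, (f (insert o S) - f S) ≤ f S := by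
    calc ∑ o ∈ O₂, (f (insert o S) - f S)
        ≤ ∑ o ∈ O₂, (f (Sets (π o + 1)) - f (Sets (π o))) :=
          Finset.sum_le_sum fun o ho => hπdom o ho
      _ = ∑ j ∈ O₂.image π, (f (Sets (j + 1)) - f (Sets j)) := by
          rw [Finset.sum_image (fun a ha b hb => hπinj ha hb)]
      _ ≤ ∑ j ∈ Finset.range m, (f (Sets (j + 1)) - f (Sets j)) := by
          apply Finset.sum_le_sum_of_subset_of_nonneg
          · intro j hj
            obtain ⟨o, ho, rfl⟩ := Finset.mem_image.mp hj
            exact Finset.mem_range.mpr (hπlt o ho)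
          · intro j hj _; exact hgain j (Finset.mem_range.mp hj)
      _ = f S - f (Sets 0) := htel
      _ ≤ f S := by have := hnn (Sets 0); linarith
  -- sum over O₃
  have hO3 : ∑ o ∈ O₃, (f (insert o S) - f S) ≤ β * f O := by
    calc ∑ o ∈ O₃, (f (insert o S) - f S) ≤ ∑ _o ∈ O₃, β * f O / k :=
          Finset.sum_le_sum fun o ho => hsmall o ho
      _ = (O₃.card : ℝ) * (β * f O / k) := by rw [Finset.sum_const, nsmul_eq_mul]
      _ ≤ (k : ℝ) * (β * f O / k) := by
          apply mul_le_mul_of_nonneg_right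
          · exact_mod_cast le_trans (Finset.card_le_card (fun x hx => by
              have : x ∈ O \ S := hOsplit ▸ Finset.mem_union_right _ hx
              exact (Finset.mem_sdiff.mp this).1)) hOcard
          · exact div_nonneg (mul_nonneg hβ0 (hnn O)) (Nat.cast_nonneg k)
      _ = β * f O := by field_simp
  -- main bound
  have hmain : f O ≤ f S + ∑ o ∈ O \ S, (f (insert o S) - f S) := by
    have h1 : f O ≤ f (S ∪ (O \ S)) := hmono _ _ (fun x hx => by
      simp [Finset.mem_union, Finset.mem_sdiff]; tauto)
    have h2 := marginal_sum_bound f hmono hsub S (O \ S)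
    linarith
  rw [hOsplit, Finset.sum_union hOdisj] at hmain
  linarith
end

section
/- (Lemma 2, Case 2 / combined conclusion.) Let f : Finset V → ℝ be nonnegative, monotone, and submodular, let k ≥ 1 be an integer, let α ≥ 0 and β ∈ [0, 1), and let s_1, …, s_m be a greedy sequence of length m for f with final set S = S_m and gains g_1, …, g_m. Let O ⊆ V be a finite set with |O| ≤ k, and write O \ S = O₂ ⊎ O₃ as a disjoint union. Suppose (i) there is an injective map π : O₂ → {1, …, m} such that Δf(o|S) ≤ (1 + α)·g_{π(o)} for every o ∈ O₂, and (ii) Δf(o|S) ≤ β·f(O)/k for every o ∈ O₃. Then f(S) ≥ ((1 − β)/(2 + α))·f(O). -/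
private lemma subadd_aux {V : Type*} [DecidableEq V] (f : Finset V → ℝ)
    (hmono : ∀ A B : Finset V, A ⊆ B → f A ≤ f B)
    (hsub : ∀ (A B : Finset V), A ⊆ B → ∀ v ∉ B,
      f (insert v B) - f B ≤ f (insert v A) - f A)
    (S : Finset V) : ∀ T : Finset V,
    f (S ∪ T) ≤ f S + ∑ o ∈ T, (f (insert o S) - f S) := by
  intro T
  refine Finset.induction_on T ?_ ?_
  · simp
  · intro a T ha ih
    rw [Finset.sum_insert ha]
    by_cases haST : a ∈ S ∪ T
    · have h1 : S ∪ insert a T = S ∪ T := by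
        rw [Finset.union_insert, Finset.insert_eq_self.mpr haST]
      have h2 : 0 ≤ f (insert a S) - f S := by
        have := hmono S (insert a S) (Finset.subset_insert _ _)
        linarith
      rw [h1]; linarith
    · have h3 : S ∪ insert a T = insert a (S ∪ T) := by
        rw [Finset.union_insert]
      have h4 := hsub S (S ∪ T) Finset.subset_union_left a haST
      rw [h3]; linarith

/-- Lemma 2, Case 2 / combined conclusion: let `S = Sets m` be the final
set of a greedy sequence of length `m` for `f`, `O` with `|O| ≤ k`, and
`O \ S = O₂ ⊎ O₃`. If every `o ∈ O₂` can be injectively charged to a step `π o < m`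
with `Δf(o|S) ≤ (1+α)·g_{π o}`, and every `o ∈ O₃` has marginal gain at most
`β·f(O)/k`, then `f S ≥ ((1-β)/(2+α))·f O`. -/
theorem sp_fsm_combined
    {V : Type*} [DecidableEq V] (f : Finset V → ℝ)
    (hnn : ∀ S : Finset V, 0 ≤ f S)
    (hmono : ∀ A B : Finset V, A ⊆ B → f A ≤ f B)
    (hsub : ∀ (A B : Finset V), A ⊆ B → ∀ v ∉ B,
      f (insert v B) - f B ≤ f (insert v A) - f A)
    (k : ℕ) (hk : 1 ≤ k) (α β : ℝ) (hα0 : 0 ≤ α) (hβ0 : 0 ≤ β) (hβ1 : β < 1)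
    (m : ℕ) (Sets : ℕ → Finset V) (hinit : Sets 0 = ∅)
    (hstep : ∀ j < m, ∃ v ∉ Sets j, Sets (j + 1) = insert v (Sets j))
    (O O₂ O₃ : Finset V) (hOcard : O.card ≤ k)
    (hOsplit : O \ Sets m = O₂ ∪ O₃) (hOdisj : Disjoint O₂ O₃)
    (π : V → ℕ) (hπlt : ∀ o ∈ O₂, π o < m) (hπinj : Set.InjOn π ↑O₂)
    (hπdom : ∀ o ∈ O₂,
      f (insert o (Sets m)) - f (Sets m) ≤
        (1 + α) * (f (Sets (π o + 1)) - f (Sets (π o))))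
    (hsmall : ∀ o ∈ O₃, f (insert o (Sets m)) - f (Sets m) ≤ β * f O / k) :
    ((1 - β) / (2 + α)) * f O ≤ f (Sets m) := by
  set S := Sets m with hS
  -- gain nonneg
  have hgain : ∀ j < m, 0 ≤ f (Sets (j+1)) - f (Sets j) := by
    intro j hj
    obtain ⟨v, hv, heq⟩ := hstep j hj
    rw [heq]
    have := hmono (Sets j) (insert v (Sets j)) (Finset.subset_insert _ _)
    linarith
  have htel : ∑ j ∈ Finset.range m, (f (Sets (j+1)) - f (Sets j))
      = f (Sets m) - f (Sets 0) := Finset.sum_range_sub (fun j => f (Sets j)) m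
  have hsumg : ∑ j ∈ Finset.range m, (f (Sets (j+1)) - f (Sets j)) ≤ f S := by
    rw [htel]; have := hnn (Sets 0); linarith
  -- subadditivity applied to O \ S
  have hO : f O ≤ f S + ∑ o ∈ O \ S, (f (insert o S) - f S) := by
    have h1 : f O ≤ f (S ∪ (O \ S)) :=
      hmono O _ (fun x hx => by
        by_cases h : x ∈ S
        · exact Finset.mem_union_left _ h
        · exact Finset.mem_union_right _ (Finset.mem_sdiff.mpr ⟨hx, h⟩))
    exact h1.trans (subadd_aux f hmono hsub S _)
  rw [hOsplit, Finset.sum_union hOdisj] at hO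
  -- bound O₂ sum
  have hO2 : ∑ o ∈ O₂, (f (insert o S) - f S) ≤ (1 + α) * f S := by
    have h1 : ∑ o ∈ O₂, (f (insert o S) - f S)
        ≤ ∑ o ∈ O₂, (1 + α) * (f (Sets (π o + 1)) - f (Sets (π o))) :=
      Finset.sum_le_sum fun o ho => hπdom o ho
    have h2 : ∑ o ∈ O₂, (f (Sets (π o + 1)) - f (Sets (π o)))
        = ∑ j ∈ O₂.image π, (f (Sets (j + 1)) - f (Sets j)) := by
      rw [Finset.sum_image (fun a ha b hb h => hπinj ha hb h)]
    have h3 : ∑ j ∈ O₂.image π, (f (Sets (j + 1)) - f (Sets j))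
        ≤ ∑ j ∈ Finset.range m, (f (Sets (j+1)) - f (Sets j)) := by
      apply Finset.sum_le_sum_of_subset_of_nonneg
      · intro j hj
        obtain ⟨o, ho, rfl⟩ := Finset.mem_image.mp hj
        exact Finset.mem_range.mpr (hπlt o ho)
      · intro j hj _; exact hgain j (Finset.mem_range.mp hj)
    calc ∑ o ∈ O₂, (f (insert o S) - f S)
        ≤ (1 + α) * ∑ o ∈ O₂, (f (Sets (π o + 1)) - f (Sets (π o))) := by
          rw [Finset.mul_sum]; exact h1
      _ ≤ (1 + α) * f S := by
          apply mul_le_mul_of_nonneg_left _ (by linarith)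
          rw [h2]; exact h3.trans hsumg
  -- bound O₃ sum
  have hO3 : ∑ o ∈ O₃, (f (insert o S) - f S) ≤ β * f O := by
    have h1 : ∑ o ∈ O₃, (f (insert o S) - f S) ≤ O₃.card * (β * f O / k) := by
      have := Finset.sum_le_card_nsmul O₃ _ (β * f O / k) (fun o ho => hsmall o ho)
      simpa using this
    have hcard : O₃.card ≤ k := by
      have : O₃ ⊆ O := fun x hx => by
        have : x ∈ O \ S := hOsplit ▸ Finset.mem_union_right _ hx
        exact (Finset.mem_sdiff.mp this).1
      exact (Finset.card_le_card this).trans hOcard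
    have hknz : (0:ℝ) < k := by exact_mod_cast hk
    have hq : (0:ℝ) ≤ β * f O / k := div_nonneg (mul_nonneg hβ0 (hnn O)) hknz.le
    calc ∑ o ∈ O₃, (f (insert o S) - f S) ≤ O₃.card * (β * f O / k) := h1
      _ ≤ k * (β * f O / k) := by
          apply mul_le_mul_of_nonneg_right _ hq
          exact_mod_cast hcard
      _ = β * f O := by field_simp
  -- combine
  have key : (1 - β) * f O ≤ (2 + α) * f S := by nlinarith [hnn S, hnn O]
  rw [div_mul_eq_mul_div, div_le_iff₀ (by linarith : (0:ℝ) < 2 + α)]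
  linarith
end
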